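/- If a nonnegative integrable u on a set of finite measure satisfies ∫_{L(k)} (u − k) dx ≤ M k |L(k)|^{1+ε} for all k ≥ k₁ ≥ 1, where L(k) = {u > k}, M > 0 and ε > 0, then u ∈ L^∞, i.e. there exists K < ∞ with |L(K)| = 0. -/

import Mathlib

open Real MeasureTheory

theorem ladyzhenskaya_uraltseva {N : ℕ} (Ω : Set (EuclideanSpace ℝ (Fin N)))
    (hΩ : MeasurableSet Ω) (hΩf : volume Ω < ⊤)
    (u : EuclideanSpace ℝ (Fin N) → ℝ) (hu : Measurable u)
    (hnn : ∀ x ∈ Ω, 0 ≤ u x) (hint : IntegrableOn u Ω volume)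
    (M ε k₁ : ℝ) (hM : 0 < M) (hε : 0 < ε) (hk₁ : 1 ≤ k₁)
    (hrec : ∀ k ≥ k₁, (∫ x in {x ∈ Ω | k < u x}, (u x - k)) ≤
      M * k * (volume {x ∈ Ω | k < u x}).toReal ^ (1 + ε)) :
    ∃ K : ℝ, volume {x ∈ Ω | K < u x} = 0 := by
  classical
  set L : ℝ → Set (EuclideanSpace ℝ (Fin N)) := fun k => {x ∈ Ω | k < u x} with hLdef
  have hLmeas : ∀ k, MeasurableSet (L k) := fun k =>
    hΩ.inter (measurableSet_lt measurable_const hu)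
  have hLsub : ∀ k, L k ⊆ Ω := fun k x hx => hx.1
  have hLfin : ∀ k, volume (L k) < ⊤ := fun k =>
    lt_of_le_of_lt (measure_mono (hLsub k)) hΩf
  set φ : ℝ → ℝ := fun k => (volume (L k)).toReal with hφdef
  have φnn : ∀ k, 0 ≤ φ k := fun k => ENNReal.toReal_nonneg
  have hmono : ∀ k h : ℝ, k ≤ h → φ h ≤ φ k := by
    intro k h hkh
    exact ENNReal.toReal_le_toReal (hLfin h).ne (hLfin k).ne |>.mpr
      (measure_mono (fun x hx => ⟨hx.1, lt_of_le_of_lt hkh hx.2⟩))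
  have hIu : ∀ k, IntegrableOn u (L k) := fun k => hint.mono_set (hLsub k)
  have hIc : ∀ (c : ℝ) (k : ℝ), IntegrableOn (fun _ => c) (L k) := fun c k =>
    integrableOn_const (hLfin k).ne
  have hIsub : ∀ (c : ℝ) (k : ℝ), IntegrableOn (fun x => u x - c) (L k) := fun c k =>
    (hIu k).sub (hIc c k)
  have hA0 : 0 ≤ ∫ x in Ω, u x := setIntegral_nonneg hΩ hnn
  set A : ℝ := ∫ x in Ω, u x with hAdef
  -- Chebyshev
  have cheb : ∀ k : ℝ, 0 < k → k * φ k ≤ A := by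
    intro k hk
    have h1 : k * φ k = ∫ _x in L k, k := by
      rw [setIntegral_const, smul_eq_mul, mul_comm]
      rfl
    rw [h1]
    calc ∫ _x in L k, k ≤ ∫ x in L k, u x :=
          setIntegral_mono_on (hIc k k) (hIu k) (hLmeas k) (fun x hx => le_of_lt hx.2)
      _ ≤ ∫ x in Ω, u x :=
          setIntegral_mono_set hint ((ae_restrict_iff' hΩ).2 (ae_of_all _ hnn))
            (HasSubset.Subset.eventuallyLE (hLsub k))
  -- key recursive step
  have step : ∀ k h : ℝ, k₁ ≤ k → k < h → (h - k) * φ h ≤ M * k * φ k ^ (1 + ε) := by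
    intro k h hk hkh
    have hsub : L h ⊆ L k := fun x hx => ⟨hx.1, lt_trans hkh hx.2⟩
    have h1 : (h - k) * φ h = ∫ _x in L h, (h - k) := by
      rw [setIntegral_const, smul_eq_mul, mul_comm]
      rfl
    rw [h1]
    calc ∫ _x in L h, (h - k) ≤ ∫ x in L h, (u x - k) :=
          setIntegral_mono_on (hIc _ _) (hIsub k h) (hLmeas h)
            (fun x hx => by have := hx.2; linarith)
      _ ≤ ∫ x in L k, (u x - k) :=
          setIntegral_mono_set (hIsub k k)
            ((ae_restrict_iff' (hLmeas k)).2 (ae_of_all _ (fun x hx => by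
              have h2 := hx.2
              simp only [Pi.zero_apply]
              linarith)))
            (HasSubset.Subset.eventuallyLE hsub)
      _ ≤ M * k * φ k ^ (1 + ε) := hrec k hk
  -- constants for the iteration
  set r : ℝ := (2 : ℝ) ^ (-(1/ε)) with hrdef
  have hr0 : 0 < r := rpow_pos_of_pos two_pos _
  have hr1 : r < 1 := by
    apply rpow_lt_one_of_one_lt_of_neg one_lt_two
    simp only [neg_neg, Left.neg_neg_iff]
    positivity
  have hrε : r ^ ε = 1/2 := by
    rw [hrdef, ← Real.rpow_mul (by norm_num : (0:ℝ) ≤ 2)]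
    have : -(1/ε) * ε = -1 := by field_simp
    rw [this, rpow_neg_one]
    norm_num
  set θ : ℝ := (r / (4*M)) ^ (1/ε) with hθdef
  have hθ0 : 0 < θ := rpow_pos_of_pos (div_pos hr0 (by linarith)) _
  have hθε : θ ^ ε = r / (4*M) := by
    rw [hθdef, ← Real.rpow_mul (le_of_lt (div_pos hr0 (by linarith)))]
    rw [one_div_mul_cancel hε.ne', rpow_one]
  -- starting level
  set K0 : ℝ := max k₁ (A/θ + 1) with hK0def
  have hK0k₁ : k₁ ≤ K0 := le_max_left _ _
  have hK0pos : 0 < K0 := lt_of_lt_of_le (by linarith) hK0k₁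
  have hφK0 : φ K0 ≤ θ := by
    have h1 : K0 * φ K0 ≤ A := cheb K0 hK0pos
    have h2 : A/θ + 1 ≤ K0 := le_max_right _ _
    have h3 : A ≤ θ * K0 := by
      have : θ * (A/θ + 1) = A + θ := by field_simp
      nlinarith
    nlinarith [φnn K0]
  -- the level sequence
  set κ : ℕ → ℝ := fun n => 2*K0 - K0 * (1/2:ℝ)^n with hκdef
  have hκge : ∀ n, K0 ≤ κ n := by
    intro n
    have h1 : (1/2:ℝ)^n ≤ 1 := pow_le_one₀ (by norm_num) (by norm_num)
    have := hK0pos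
    simp only [hκdef]
    nlinarith
  have hκle : ∀ n, κ n ≤ 2*K0 := by
    intro n
    have h1 : (0:ℝ) ≤ (1/2:ℝ)^n := by positivity
    simp only [hκdef]
    nlinarith [hK0pos]
  have hκdiff : ∀ n, κ (n+1) - κ n = K0 * (1/2:ℝ)^(n+1) := by
    intro n
    simp only [hκdef]
    rw [pow_succ]
    ring
  have hκlt : ∀ n, κ n < κ (n+1) := by
    intro n
    have h2 : (0:ℝ) < κ (n+1) - κ n := by rw [hκdiff n]; positivity
    linarith
  set a : ℕ → ℝ := fun n => φ (κ n) with hadef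
  have key : ∀ n, a (n+1) ≤ 4*M*2^n * a n ^ (1+ε) := by
    intro n
    have h1 := step (κ n) (κ (n+1)) (le_trans hK0k₁ (hκge n)) (hκlt n)
    rw [hκdiff n] at h1
    have hX : (0:ℝ) ≤ a n ^ (1+ε) := rpow_nonneg (φnn _) _
    have h2 : M * κ n * a n ^ (1+ε) ≤ M * (2*K0) * a n ^ (1+ε) := by
      apply mul_le_mul_of_nonneg_right _ hX
      exact mul_le_mul_of_nonneg_left (hκle n) hM.le
    have hd : (0:ℝ) < K0 * (1/2:ℝ)^(n+1) := by positivity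
    have h3 : K0 * (1/2:ℝ)^(n+1) * a (n+1) ≤ M * (2*K0) * a n ^ (1+ε) := le_trans h1 h2
    have h4 : K0 * (1/2:ℝ)^(n+1) * (4*M*2^n * a n ^ (1+ε)) = M * (2*K0) * a n ^ (1+ε) := by
      have h5 : (2:ℝ)^n * (1/2:ℝ)^n = 1 := by
        rw [← mul_pow]; norm_num
      linear_combination (2*M*K0*(a n ^ (1+ε))) * h5
    exact le_of_mul_le_mul_left (by linarith) hd
  -- geometric decay
  have decay : ∀ n, a n ≤ θ * r^n := by
    intro n
    induction n with
    | zero =>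
      have : κ 0 = K0 := by simp [hκdef]; ring
      simpa [hadef, this] using hφK0
    | succ n ih =>
      have h1 : a n ^ (1+ε) ≤ (θ * r^n) ^ (1+ε) :=
        rpow_le_rpow (φnn _) ih (by linarith)
      have h2 : a (n+1) ≤ 4*M*2^n * (θ * r^n) ^ (1+ε) := by
        calc a (n+1) ≤ 4*M*2^n * a n ^ (1+ε) := key n
          _ ≤ 4*M*2^n * (θ * r^n) ^ (1+ε) := by
              apply mul_le_mul_of_nonneg_left h1 (by positivity)
      have hbase : (0:ℝ) < θ * r^n := by positivity
      have h3 : (θ * r^n) ^ ((1:ℝ)+ε) = (θ * r^n) * (θ^ε * (r^n)^ε) := by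
        rw [Real.rpow_add hbase, rpow_one, Real.mul_rpow hθ0.le (by positivity)]
      have h4 : (r^n : ℝ)^ε = (1/2:ℝ)^n := by
        rw [← Real.rpow_natCast r n, ← Real.rpow_mul hr0.le, mul_comm,
          Real.rpow_mul hr0.le, Real.rpow_natCast, hrε]
      have h5 : 4*M*2^n * (θ * r^n) ^ ((1:ℝ)+ε) = θ * r^(n+1) := by
        rw [h3, h4]
        have h6 : (2:ℝ)^n * (1/2:ℝ)^n = 1 := by rw [← mul_pow]; norm_num
        have ht : 4*M*(θ^ε) = r := by rw [hθε]; field_simp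
        linear_combination (θ*r^n*2^n*(1/2:ℝ)^n) * ht + (θ*r^n*r) * h6
      linarith [h2, h5.le, h5.ge]
  -- conclude
  refine ⟨2*K0, ?_⟩
  have hle : ∀ n, φ (2*K0) ≤ θ * r^n := fun n => le_trans (hmono _ _ (hκle n)) (decay n)
  have htend : Filter.Tendsto (fun n => θ * r^n) Filter.atTop (nhds 0) := by
    have := (tendsto_pow_atTop_nhds_zero_of_lt_one hr0.le hr1).const_mul θ
    simpa using this
  have h0 : φ (2*K0) ≤ 0 := ge_of_tendsto' htend hle
  have hφ0 : φ (2*K0) = 0 := le_antisymm h0 (φnn _)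
  have := (ENNReal.toReal_eq_zero_iff _).mp hφ0
  rcases this with h | h
  · exact h
  · exact absurd h (hLfin (2*K0)).ne
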